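/- Let U : ℝ → ℝ and Φ : ℝ → (0,∞) with Φ(x) = exp(x/d), d > 0. For random payoffs X, Y with U_a = E[U(X)], U_b = E[U(Y)], if X ≥ Y pointwise (as coupled random variables on the same space) with strict inequality on a set of positive measure and U is strictly increasing, then E[Φ(U_b)/(Φ(U_b)+Φ(U_a+U(X)))] < E[Φ(U_a)/(Φ(U_a)+Φ(U_b+U(Y)))]. -/

import Mathlib

open MeasureTheory Real

/- With `Φ = exp (· / d)` one has `Φ a / (Φ a + Φ t) = σ ((a - t) / d)` for the sigmoid `σ`, which
is strictly increasing. Dominance `Y ≤ X`, strict on a set of positive measure, gives `U_b < U_a`;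
hence at every outcome the sigmoid argument of the first integrand, `(U_b - U_a - U(X)) / d`, is
strictly below that of the second, `(U_a - U_b - U(Y)) / d`, and integration against a probability
measure keeps the strict inequality. -/

lemma exp_div_div_exp_div_add_exp_div (a t d : ℝ) :
    exp (a / d) / (exp (a / d) + exp (t / d)) = sigmoid ((a - t) / d) := by
  rw [sigmoid_def, sub_div, neg_sub, sub_eq_add_neg, exp_add, exp_neg]
  field_simp

section Integral

variable {α : Type*} [MeasurableSpace α] {μ : Measure α}

lemma integrable_sigmoid_comp [IsFiniteMeasure μ] {f : α → ℝ} (hf : AEStronglyMeasurable f μ) :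
    Integrable (fun x => sigmoid (f x)) μ :=
  Integrable.of_bound (continuous_sigmoid.comp_aestronglyMeasurable hf) 1 <|
    ae_of_all _ fun x => by
      rw [Real.norm_of_nonneg (sigmoid_nonneg _)]
      exact sigmoid_le_one _

lemma integral_lt_integral_of_ae_le_of_measure_setOf_lt_pos {f g : α → ℝ}
    (hf : Integrable f μ) (hg : Integrable g μ) (hle : f ≤ᵐ[μ] g)
    (hlt : 0 < μ {x | f x < g x}) : ∫ x, f x ∂μ < ∫ x, g x ∂μ := by
  have hpos : 0 < ∫ x, (g x - f x) ∂μ := by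
    rw [integral_pos_iff_support_of_nonneg_ae (hle.mono fun x hx => sub_nonneg.2 hx)
      (hg.sub hf)]
    exact hlt.trans_le <| measure_mono fun x hx => sub_ne_zero.2 (ne_of_gt hx)
  rwa [integral_sub hg hf, sub_pos] at hpos

end Integral

theorem rps_phi_monotone {Ω : Type*} [MeasurableSpace Ω] (μ : Measure Ω)
    [IsProbabilityMeasure μ] (U : ℝ → ℝ) (hU : StrictMono U)
    (d : ℝ) (hd : 0 < d) (Φ : ℝ → ℝ) (hΦ : ∀ x, Φ x = Real.exp (x / d))
    (X Y : Ω → ℝ)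
    (hXint : Integrable (fun ω => U (X ω)) μ) (hYint : Integrable (fun ω => U (Y ω)) μ)
    (hdom : ∀ ω, Y ω ≤ X ω) (hstrict : 0 < μ {ω | Y ω < X ω})
    (Ua Ub : ℝ) (hUa : Ua = ∫ ω, U (X ω) ∂μ) (hUb : Ub = ∫ ω, U (Y ω) ∂μ) :
    (∫ ω, Φ Ub / (Φ Ub + Φ (Ua + U (X ω))) ∂μ) <
      ∫ ω, Φ Ua / (Φ Ua + Φ (Ub + U (Y ω))) ∂μ := by
  have hUab : Ub < Ua := by
    rw [hUa, hUb]
    refine integral_lt_integral_of_ae_le_of_measure_setOf_lt_pos hYint hXint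
      (ae_of_all _ fun ω => hU.monotone (hdom ω)) ?_
    simpa only [hU.lt_iff_lt] using hstrict
  have hlt : ∀ ω, sigmoid ((Ub - (Ua + U (X ω))) / d) < sigmoid ((Ua - (Ub + U (Y ω))) / d) :=
    fun ω => sigmoid_lt <| div_lt_div_of_pos_right (by linarith [hU.monotone (hdom ω)]) hd
  simp only [hΦ, exp_div_div_exp_div_add_exp_div]
  refine integral_lt_integral_of_ae_le_of_measure_setOf_lt_pos
    (integrable_sigmoid_comp ?_) (integrable_sigmoid_comp ?_) (ae_of_all _ fun ω => (hlt ω).le) ?_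
  · exact (by fun_prop : Continuous fun t => (Ub - (Ua + t)) / d).comp_aestronglyMeasurable
      hXint.aestronglyMeasurable
  · exact (by fun_prop : Continuous fun t => (Ua - (Ub + t)) / d).comp_aestronglyMeasurable
      hYint.aestronglyMeasurable
  · simp [hlt]
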